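/- arXiv:2208.09215 — 3 statements merged into one kernel-verified Lean document; each statement's English description precedes it below -/
import Mathlib

section
/- Let K, M be integers with K ≥ 2 and M ≥ 1, let δ ∈ (0,1), and let Δ ∈ ℝ with 0 < Δ ≤ 8. Define T := 102·ln(64·√(8KM/δ)/Δ²)/Δ² + 1. Then for every real x ≥ T, one has ln(8KM·x²/δ) ≤ Δ²·x/32; equivalently, the local confidence parameter satisfies α_l(x) = √(2·ln(8KMx²/δ)/x) ≤ Δ/4. -/
/-- Core inequality of Lemma 3 of the paper: for
`T = 102 · ln(64·√(8KM/δ)/Δ²)/Δ² + 1`, every `x ≥ T` satisfies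
`ln(8KM x²/δ) ≤ Δ² x / 32`, equivalently the local confidence parameter
`α_l(x) = √(2 ln(8KM x²/δ)/x)` is at most `Δ/4`. -/
theorem local_confidence_radius_bound
    (K M : ℕ) (hK : 2 ≤ K) (hM : 1 ≤ M)
    (δ : ℝ) (hδ : δ ∈ Set.Ioo (0 : ℝ) 1)
    (Δ : ℝ) (hΔ : 0 < Δ) (hΔ8 : Δ ≤ 8) :
    ∀ x : ℝ,
      x ≥ 102 * Real.log (64 * Real.sqrt (8 * K * M / δ) / Δ ^ 2) / Δ ^ 2 + 1 →
      Real.log (8 * K * M * x ^ 2 / δ) ≤ Δ ^ 2 * x / 32 ∧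
      Real.sqrt (2 * Real.log (8 * K * M * x ^ 2 / δ) / x) ≤ Δ / 4 := by
  obtain ⟨hδ0, hδ1⟩ := hδ
  intro x hx
  have hK' : (2:ℝ) ≤ (K:ℝ) := by exact_mod_cast hK
  have hM' : (1:ℝ) ≤ (M:ℝ) := by exact_mod_cast hM
  set g : ℝ := Δ ^ 2 with hg
  have hg0 : 0 < g := by positivity
  have hg64 : g ≤ 64 := by nlinarith
  set A : ℝ := 8 * (K:ℝ) * (M:ℝ) / δ with hA
  have hA16 : (16:ℝ) ≤ A := by
    rw [hA, le_div_iff₀ hδ0]; nlinarith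
  have hA0 : (0:ℝ) < A := by linarith
  have hsA : (4:ℝ) ≤ Real.sqrt A := by
    have : Real.sqrt 16 ≤ Real.sqrt A := Real.sqrt_le_sqrt hA16
    have h16 : Real.sqrt 16 = 4 := by
      rw [show (16:ℝ) = 4 ^ 2 by norm_num, Real.sqrt_sq (by norm_num : (0:ℝ) ≤ 4)]
    linarith
  have hsA0 : 0 < Real.sqrt A := by linarith
  set L : ℝ := Real.log (64 * Real.sqrt A / g) with hL
  have hL0 : 0 ≤ L := by
    apply Real.log_nonneg
    rw [le_div_iff₀ hg0]; nlinarith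
  have hx1 : 1 ≤ x := by
    have : 0 ≤ 102 * L / g := by positivity
    linarith [hx]
  have hx0 : 0 < x := by linarith
  set u : ℝ := g * x / 64 with hu
  have hu0 : 0 < u := by positivity
  -- from x ≥ 102 L / g + 1 : 102 L + g ≤ 64 u
  have h2 : 102 * L + g ≤ 64 * u := by
    have h3 : g * (102 * L / g + 1) ≤ g * x := mul_le_mul_of_nonneg_left hx hg0.le
    have h4 : g * (102 * L / g + 1) = 102 * L + g := by field_simp
    rw [hu]; linarith [h3, h4 ▸ h3]
  have hLu : L ≤ 64 / 102 * u := by nlinarith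
  -- log u ≤ u / e
  have hlogu : Real.log u ≤ u / Real.exp 1 := by
    have h := Real.log_le_sub_one_of_pos (show 0 < u / Real.exp 1 by positivity)
    rw [Real.log_div hu0.ne' (Real.exp_ne_zero 1), Real.log_exp] at h
    linarith
  have he : (51:ℝ) / 19 ≤ Real.exp 1 := by
    have := Real.exp_one_gt_d9
    norm_num at this ⊢
    linarith
  have hue : u / Real.exp 1 ≤ u / (51 / 19) :=
    div_le_div_of_nonneg_left hu0.le (by norm_num) he
  have hlogu' : Real.log u ≤ 19 / 51 * u := by
    have : u / (51 / 19) = 19 / 51 * u := by ring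
    linarith [hlogu, hue, this ▸ hue]
  have hsum : L + Real.log u ≤ u := by
    have : (64:ℝ) / 102 * u + 19 / 51 * u = u := by ring
    linarith
  -- rewrite the log
  have key : Real.log (8 * (K:ℝ) * (M:ℝ) * x ^ 2 / δ) = 2 * (L + Real.log u) := by
    have h1 : 8 * (K:ℝ) * (M:ℝ) * x ^ 2 / δ = (Real.sqrt A * x) ^ 2 := by
      rw [mul_pow, Real.sq_sqrt hA0.le, hA]; ring
    rw [h1]
    have h2' : Real.log ((Real.sqrt A * x) ^ 2) = 2 * Real.log (Real.sqrt A * x) := by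
      rw [Real.log_pow]; push_cast; ring
    rw [h2']
    have h3' : Real.sqrt A * x = (64 * Real.sqrt A / g) * u := by
      rw [hu]; field_simp
    rw [h3', Real.log_mul (by positivity) hu0.ne', hL]
  have goal1 : Real.log (8 * (K:ℝ) * (M:ℝ) * x ^ 2 / δ) ≤ g * x / 32 := by
    rw [key]
    have : g * x / 32 = 2 * u := by rw [hu]; ring
    linarith
  refine ⟨by rw [hg] at goal1; exact goal1, ?_⟩
  have harg : 2 * Real.log (8 * (K:ℝ) * (M:ℝ) * x ^ 2 / δ) / x ≤ (Δ / 4) ^ 2 := by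
    rw [div_le_iff₀ hx0]
    nlinarith [goal1]
  calc Real.sqrt (2 * Real.log (8 * (K:ℝ) * (M:ℝ) * x ^ 2 / δ) / x)
      ≤ Real.sqrt ((Δ / 4) ^ 2) := Real.sqrt_le_sqrt harg
    _ = Δ / 4 := Real.sqrt_sq (by positivity)
end

section
/- Let K, M be integers with K ≥ 2 and M ≥ 1, let δ ∈ (0,1), and let Δ > 0 be a real number with M·Δ² ≤ 64. Define T := 102·ln(64·√(8K/δ)/(M·Δ²))/(M·Δ²) + 1. Then for every real x ≥ T, one has ln(8K·x²/δ) ≤ M·Δ²·x/32; equivalently, the global confidence parameter satisfies α_g(x) = √(2·ln(8Kx²/δ)/(Mx)) ≤ Δ/4. -/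
/-!
Write `c = MΔ²` and `A = 8K/δ`, so that `ln(8Kx²/δ) = ln A + 2 ln x`. The threshold
`x ≥ 102 ln(64√A/c)/c + 1` bounds `ln A` by `(x - 1)c/51 + 2 ln c - 2 ln 64`, and the tangent
line of `ln` with slope `a = 19c/3264` bounds `2 ln x` by `2ax - 2 - 2 ln a`. The slope is chosen
so that `1/51 + 2a/c = 1/32`; the remaining constants cancel because `64 · 19/3264 = 19/51 ≥ 1/e`.
-/

open Real

namespace Real

theorem log_le_mul_sub_one_sub_log {a x : ℝ} (ha : 0 < a) (hx : 0 < x) :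
    log x ≤ a * x - 1 - log a := by
  have h := log_le_sub_one_of_pos (mul_pos ha hx)
  rw [log_mul ha.ne' hx.ne'] at h
  linarith

theorem neg_one_le_log_nineteen_div_fiftyone : -1 ≤ log (19 / 51) :=
  (le_log_iff_exp_le (by norm_num)).mpr (exp_neg_one_lt_d9.le.trans (by norm_num))

end Real

section Threshold

variable {A c x : ℝ}

theorem one_le_threshold (hA : 1 ≤ A) (hc : 0 < c) (hc64 : c ≤ 64) :
    1 ≤ 102 * log (64 * √A / c) / c + 1 := by
  have h64 : 1 ≤ 64 * √A / c := by
    rw [le_div_iff₀ hc]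
    nlinarith [one_le_sqrt.mpr hA]
  have := div_nonneg (mul_nonneg (by norm_num : (0 : ℝ) ≤ 102) (log_nonneg h64)) hc.le
  linarith

theorem log_mul_sq_le_of_threshold_le (hA : 0 < A) (hc : 0 < c) (hx : 0 < x)
    (hT : 102 * log (64 * √A / c) / c + 1 ≤ x) :
    log (A * x ^ 2) ≤ c * x / 32 := by
  have hlogT : log (64 * √A / c) = log 64 + log A / 2 - log c := by
    rw [log_div (by positivity) hc.ne', log_mul (by norm_num) (by positivity), log_sqrt hA.le]
  have hlogA : 102 * (log 64 + log A / 2 - log c) ≤ (x - 1) * c := by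
    rw [← hlogT, ← div_le_iff₀ hc]
    linarith
  have hlogx : log x ≤ 19 / 3264 * c * x - 1 - (log (19 / 3264) + log c) := by
    rw [← log_mul (by norm_num) hc.ne']
    exact log_le_mul_sub_one_sub_log (by positivity) hx
  have hconst : -1 ≤ log 64 + log (19 / 3264) := by
    rw [← log_mul (by norm_num) (by norm_num)]
    norm_num [neg_one_le_log_nineteen_div_fiftyone]
  rw [log_mul hA.ne' (by positivity), log_pow]
  push_cast
  linarith

end Threshold

/-- Core inequality of Lemma 4 of the paper: for
`T = 102 · ln(64·√(8K/δ)/(MΔ²))/(MΔ²) + 1`, every `x ≥ T` satisfies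
`ln(8K x²/δ) ≤ M Δ² x / 32`, equivalently the global confidence parameter
`α_g(x) = √(2 ln(8K x²/δ)/(Mx))` is at most `Δ/4`. -/
theorem global_confidence_radius_bound
    (K M : ℕ) (hK : 2 ≤ K) (hM : 1 ≤ M)
    (δ : ℝ) (hδ : δ ∈ Set.Ioo (0 : ℝ) 1)
    (Δ : ℝ) (hΔ : 0 < Δ) (hMΔ : M * Δ ^ 2 ≤ 64) :
    ∀ x : ℝ,
      x ≥ 102 * Real.log (64 * Real.sqrt (8 * K / δ) / (M * Δ ^ 2)) / (M * Δ ^ 2) + 1 →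
      Real.log (8 * K * x ^ 2 / δ) ≤ M * Δ ^ 2 * x / 32 ∧
      Real.sqrt (2 * Real.log (8 * K * x ^ 2 / δ) / (M * x)) ≤ Δ / 4 := by
  intro x hx
  obtain ⟨hδ0, hδ1⟩ := hδ
  have hK2 : (2 : ℝ) ≤ K := by exact_mod_cast hK
  have hM0 : (0 : ℝ) < M := by exact_mod_cast hM
  have hA : 1 ≤ 8 * K / δ := by
    rw [le_div_iff₀ hδ0]
    linarith
  have hc : 0 < M * Δ ^ 2 := by positivity
  have hx0 : 0 < x := one_pos.trans_le ((one_le_threshold hA hc hMΔ).trans hx)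
  have hlog : Real.log (8 * K * x ^ 2 / δ) ≤ M * Δ ^ 2 * x / 32 := by
    rw [mul_div_right_comm]
    exact log_mul_sq_le_of_threshold_le (by linarith) hc hx0 hx
  refine ⟨hlog, (Real.sqrt_le_left (by positivity)).mpr ?_⟩
  rw [div_le_iff₀ (by positivity)]
  linarith
end

section
/- Fix integers K ≥ 2 and M ≥ 1, a problem instance μ ∈ ℝ^{K×M}, and a constant L ≥ 0. Assume each local best arm k*_m is the unique maximizer of k ↦ μ(k,m) and the global best arm k* is the unique maximizer of k ↦ μ̄_k. Call an instance μ' ∈ ℝ^{K×M} alternative to μ if it is NOT the case that both (for every m and every j ≠ k*_m, μ'(k*_m, m) > μ'(j, m)) and (for every j ≠ k*, (1/M)·∑_m μ'(k*,m) > (1/M)·∑_m μ'(j,m)). Suppose x : [K]×[M] → [0,∞) satisfies ∑_{k=1}^K ∑_{m=1}^M x(k,m)·(μ(k,m) − μ'(k,m))² ≥ 2L for every instance μ' alternative to μ. Then for every (k,m) ∈ [K]×[M], x(k,m) ≥ max{ 2L/Δ_{k,m}², 2L/(M²·Δ_k²) }, and consequently ∑_{k,m} x(k,m) ≥ ∑_{k=1}^K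 ∑_{m=1}^M max{ 2L/Δ_{k,m}², 2L/(M²·Δ_k²) }. -/
/-!
Perturb `μ` at the single entry `(k, m)` by just enough to create a tie: by `±Δ_{k,m}` to tie
the local ranking at client `m`, or by `±M·Δ_k` to tie the global ranking. The perturbed
instance is then alternative, and the transportation sum collapses to `x(k,m)` times the square
of the perturbation.
-/

open Finset

section Perturbation

variable {ι κ : Type*} [DecidableEq ι] [DecidableEq κ]

theorem exists_tie_of_gap {f Δ : ι → ℝ} {i : ι} (hΔ : ∀ k, k ≠ i → Δ k = f i - f k)
    (hΔi : IsLeast (Δ '' {k | k ≠ i}) (Δ i)) (k : ι) :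
    ∃ c, c ^ 2 = Δ k ^ 2 ∧
      ∃ j ≠ i, (f + Pi.single k c : ι → ℝ) j = (f + Pi.single k c : ι → ℝ) i := by
  by_cases hk : k = i
  · subst hk
    obtain ⟨j, hj, hji⟩ := hΔi.1
    refine ⟨-Δ k, by ring, j, hj, ?_⟩
    have hj' : Δ j = f k - f j := hΔ j hj
    simp only [Pi.add_apply, Pi.single_eq_same, Pi.single_eq_of_ne hj]
    linarith
  · refine ⟨Δ k, rfl, k, hk, ?_⟩
    simp only [Pi.add_apply, Pi.single_eq_same, Pi.single_eq_of_ne' hk, hΔ k hk]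
    ring

theorem add_single_single_apply (μ : ι → κ → ℝ) (k j : ι) (m : κ) (c : ℝ) :
    (μ + Pi.single k (Pi.single m c) : ι → κ → ℝ) j m =
      ((fun i => μ i m) + Pi.single k c : ι → ℝ) j := by
  by_cases hj : j = k
  · subst hj; simp
  · simp [Pi.single_eq_of_ne hj]

variable [Fintype κ]

theorem one_div_mul_sum_add_single_single (μ : ι → κ → ℝ) (k j : ι) (m : κ) {a : ℝ}
    (ha : a ≠ 0) (c : ℝ) :
    1 / a * ∑ m', (μ + Pi.single k (Pi.single m (a * c)) : ι → κ → ℝ) j m' =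
      ((fun i => 1 / a * ∑ m', μ i m') + Pi.single k c : ι → ℝ) j := by
  by_cases hj : j = k
  · subst hj
    simp only [Pi.add_apply, Pi.single_eq_same, sum_add_distrib, sum_pi_single']
    field_simp
    simp
  · simp [Pi.single_eq_of_ne hj]

variable [Fintype ι]

theorem sum_mul_sq_sub_add_single_single (x μ : ι → κ → ℝ) (k : ι) (m : κ) (c : ℝ) :
    ∑ k', ∑ m', x k' m' *
        (μ k' m' - (μ + Pi.single k (Pi.single m c) : ι → κ → ℝ) k' m') ^ 2 =
      x k m * c ^ 2 := by
  simp [Pi.single_apply, apply_ite, ite_apply]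

end Perturbation

theorem pac_lower_bound_core_general
    (K M : ℕ)
    (μ : Fin K → Fin M → ℝ) (L : ℝ)
    (kstarm : Fin M → Fin K)
    (kstar : Fin K)
    (Δloc : Fin K → Fin M → ℝ)
    (hΔloc : ∀ m : Fin M, ∀ k : Fin K, k ≠ kstarm m →
      Δloc k m = μ (kstarm m) m - μ k m)
    (hΔlocStar : ∀ m : Fin M,
      IsLeast ((fun k => Δloc k m) '' {k | k ≠ kstarm m}) (Δloc (kstarm m) m))
    (Δglob : Fin K → ℝ)
    (hΔglob : ∀ k : Fin K, k ≠ kstar →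
      Δglob k = (1 / (M : ℝ)) * ∑ m, μ kstar m - (1 / (M : ℝ)) * ∑ m, μ k m)
    (hΔglobStar : IsLeast (Δglob '' {k | k ≠ kstar}) (Δglob kstar))
    (x : Fin K → Fin M → ℝ) (hx : ∀ k m, 0 ≤ x k m)
    (hAlt : ∀ μ' : Fin K → Fin M → ℝ,
      ¬ ((∀ m : Fin M, ∀ j : Fin K, j ≠ kstarm m → μ' (kstarm m) m > μ' j m) ∧
         (∀ j : Fin K, j ≠ kstar →
           (1 / (M : ℝ)) * ∑ m, μ' kstar m > (1 / (M : ℝ)) * ∑ m, μ' j m)) →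
      ∑ k, ∑ m, x k m * (μ k m - μ' k m) ^ 2 ≥ 2 * L) :
    (∀ k m, x k m ≥
      max (2 * L / (Δloc k m) ^ 2) (2 * L / ((M : ℝ) ^ 2 * (Δglob k) ^ 2))) ∧
    ∑ k, ∑ m, x k m ≥
      ∑ k, ∑ m, max (2 * L / (Δloc k m) ^ 2) (2 * L / ((M : ℝ) ^ 2 * (Δglob k) ^ 2)) := by
  -- the elided premise: `μ + Pi.single k (Pi.single m c)` is alternative to `μ`
  have hperturb : ∀ k m c, ¬ _ → 2 * L ≤ x k m * c ^ 2 := fun k m c h => by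
    have := hAlt (μ + Pi.single k (Pi.single m c)) h
    rwa [sum_mul_sq_sub_add_single_single] at this
  have hloc : ∀ k m, 2 * L ≤ x k m * Δloc k m ^ 2 := fun k m => by
    obtain ⟨c, hc, j, hj, htie⟩ :=
      exists_tie_of_gap (f := fun i => μ i m) (Δ := fun i => Δloc i m)
        (hΔloc m) (hΔlocStar m) k
    refine hc ▸ hperturb k m c fun ⟨hA, _⟩ => (hA m j hj).ne' ?_
    rw [add_single_single_apply, add_single_single_apply, htie]
  have hglob : ∀ k m, 2 * L ≤ x k m * ((M : ℝ) ^ 2 * Δglob k ^ 2) := fun k m => by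
    have hM : (M : ℝ) ≠ 0 := Nat.cast_ne_zero.2 m.pos.ne'
    obtain ⟨c, hc, j, hj, htie⟩ :=
      exists_tie_of_gap (f := fun i => 1 / (M : ℝ) * ∑ m, μ i m) hΔglob hΔglobStar k
    rw [← hc, ← mul_pow]
    refine hperturb k m (M * c) fun ⟨_, hB⟩ => (hB j hj).ne' ?_
    rw [one_div_mul_sum_add_single_single _ _ _ _ hM,
      one_div_mul_sum_add_single_single _ _ _ _ hM, htie]
  have hmax :
      ∀ k m, max (2 * L / Δloc k m ^ 2) (2 * L / ((M : ℝ) ^ 2 * Δglob k ^ 2)) ≤ x k m :=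
    fun k m => max_le (div_le_of_le_mul₀ (by positivity) (hx k m) (hloc k m))
      (div_le_of_le_mul₀ (by positivity) (hx k m) (hglob k m))
  exact ⟨hmax, sum_le_sum fun k _ => sum_le_sum fun m _ => hmax k m⟩

/-- Deterministic core of Theorem 3 of the paper: if the weights `x(k,m) ≥ 0` satisfy
the transportation inequality `∑_{k,m} x(k,m)·(μ(k,m) − μ'(k,m))² ≥ 2L` for every
instance `μ'` alternative to `μ` (i.e., whose answer vector differs from that of `μ`),
then each `x(k,m)` is at least `max{2L/Δ_{k,m}², 2L/(M²·Δ_k²)}`, and consequently the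
total weight is bounded below by the sum of these maxima. -/
theorem pac_lower_bound_core
    (K M : ℕ) (hK : 2 ≤ K) (hM : 1 ≤ M)
    (μ : Fin K → Fin M → ℝ) (L : ℝ) (hL : 0 ≤ L)
    (kstarm : Fin M → Fin K)
    (hlocal : ∀ m : Fin M, ∀ j : Fin K, j ≠ kstarm m → μ (kstarm m) m > μ j m)
    (kstar : Fin K)
    (hglobal : ∀ j : Fin K, j ≠ kstar →
      (1 / (M : ℝ)) * ∑ m, μ kstar m > (1 / (M : ℝ)) * ∑ m, μ j m)
    (Δloc : Fin K → Fin M → ℝ)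
    (hΔloc : ∀ m : Fin M, ∀ k : Fin K, k ≠ kstarm m →
      Δloc k m = μ (kstarm m) m - μ k m)
    (hΔlocStar : ∀ m : Fin M,
      IsLeast ((fun k => Δloc k m) '' {k | k ≠ kstarm m}) (Δloc (kstarm m) m))
    (Δglob : Fin K → ℝ)
    (hΔglob : ∀ k : Fin K, k ≠ kstar →
      Δglob k = (1 / (M : ℝ)) * ∑ m, μ kstar m - (1 / (M : ℝ)) * ∑ m, μ k m)
    (hΔglobStar : IsLeast (Δglob '' {k | k ≠ kstar}) (Δglob kstar))
    (x : Fin K → Fin M → ℝ) (hx : ∀ k m, 0 ≤ x k m)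
    (hAlt : ∀ μ' : Fin K → Fin M → ℝ,
      ¬ ((∀ m : Fin M, ∀ j : Fin K, j ≠ kstarm m → μ' (kstarm m) m > μ' j m) ∧
         (∀ j : Fin K, j ≠ kstar →
           (1 / (M : ℝ)) * ∑ m, μ' kstar m > (1 / (M : ℝ)) * ∑ m, μ' j m)) →
      ∑ k, ∑ m, x k m * (μ k m - μ' k m) ^ 2 ≥ 2 * L) :
    (∀ k m, x k m ≥
      max (2 * L / (Δloc k m) ^ 2) (2 * L / ((M : ℝ) ^ 2 * (Δglob k) ^ 2))) ∧
    ∑ k, ∑ m, x k m ≥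
      ∑ k, ∑ m, max (2 * L / (Δloc k m) ^ 2) (2 * L / ((M : ℝ) ^ 2 * (Δglob k) ^ 2)) :=
  pac_lower_bound_core_general K M μ L kstarm kstar Δloc hΔloc hΔlocStar Δglob hΔglob hΔglobStar x
    hx hAlt
end
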